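/- Let δ ≥ 1 be real, k ∈ ℕ, s > 0 and t > 0, and set u := s + t. Then for every x ≥ 0 and w ∈ ℝ, exp(t(−iw − x²/2)) · φ^{(δ)}_{s,k}(x, −w) = Σ_{l=0}^{k} C(k,l) (s/u)^{l} (1 − s/u)^{k−l} · φ^{(δ)}_{u,l}(x, −w), where C(k,l) is the binomial coefficient. (This verifies the intertwining identity in the regime s > 0 of the quantum Bessel semigroup of dimension δ, with binomial(k, s/u) mixing weights.) -/

import Mathlib

open Real

/-- Generalized Laguerre polynomial `L_k^{(α)}(x)`. -/
noncomputable def lagPoly (α : ℝ) (k : ℕ) (x : ℝ) : ℝ :=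
  ∑ i ∈ Finset.range (k + 1),
    (-1 : ℝ) ^ i * Real.Gamma (k + α + 1) * x ^ i /
      (Real.Gamma (i + α + 1) * (Nat.factorial (k - i)) * (Nat.factorial i))

/-- Character of the first kind `φ^{(δ)}_{τ,m}(x,w)` of the Laguerre hypergroup of
order `δ - 1`. -/
noncomputable def lagChar (δ τ : ℝ) (m : ℕ) (x w : ℝ) : ℂ :=
  ((Nat.factorial m * Real.Gamma δ / Real.Gamma (m + δ) : ℝ) : ℂ) *
    Complex.exp (Complex.I * τ * w - (|τ| * x ^ 2 / 2 : ℝ)) *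
    ((lagPoly (δ - 1) m (|τ| * x ^ 2) : ℝ) : ℂ)

/-!
Writing `N_m(z) = m! Γ(δ) / Γ(m + δ) · L_m^{(δ-1)}(z)`, the character at `τ > 0` is
`exp(τ(iw - x²/2)) · N_m(τx²)`. The exponentials combine to the one of `φ_{u,l}`, and the
identity reduces to the dilation formula `N_k(p y) = ∑ₗ C(k,l) pˡ (1-p)^(k-l) N_l(y)` with
`p = s/u`, `y = u x²`. Expanding `N_m(z) = ∑ᵢ C(m,i) (-1)ⁱ Γ(δ)/Γ(i+δ) zⁱ`, this follows
from `C(k,l) C(l,i) = C(k,i) C(k-i,l-i)` and the binomial theorem.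
-/

open Finset

theorem sum_choose_mul_pow_mul_sum_choose {R : Type*} [CommSemiring R] (k : ℕ) (p q : R)
    (a : ℕ → R) :
    ∑ l ∈ range (k + 1), k.choose l * p ^ l * q ^ (k - l) * ∑ i ∈ range (l + 1), l.choose i * a i
      = ∑ i ∈ range (k + 1), k.choose i * p ^ i * (p + q) ^ (k - i) * a i := by
  simp_rw [mul_sum]
  rw [sum_comm' (s' := fun i => Ico i (k + 1)) (t' := range (k + 1))
    (h := fun l i => by simp only [mem_range, mem_Ico]; omega)]
  refine sum_congr rfl fun i hi => ?_
  have hik : i ≤ k := Nat.lt_succ_iff.mp (mem_range.mp hi)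
  rw [sum_Ico_eq_sum_range, Nat.sub_add_comm hik, add_pow, mul_sum, sum_mul]
  refine sum_congr rfl fun j hj => ?_
  have hjk : j ≤ k - i := Nat.lt_succ_iff.mp (mem_range.mp hj)
  have hchoose : (k.choose (i + j) * (i + j).choose i : R) = k.choose i * (k - i).choose j := by
    have := Nat.choose_mul (n := k) (k := i + j) (s := i) (by omega)
    rw [Nat.add_sub_cancel_left] at this
    exact_mod_cast congrArg (Nat.cast : ℕ → R) this
  rw [show k - (i + j) = k - i - j by omega, pow_add]
  calc _ = (k.choose (i + j) * (i + j).choose i : R) * (p ^ i * p ^ j * q ^ (k - i - j) * a i) := by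
        ring
    _ = _ := by rw [hchoose]; ring

section NormalizedLaguerre

variable {δ : ℝ}

/-- `L_m^{(δ-1)}` normalized to take the value `1` at the origin. -/
noncomputable def normLagPoly (δ : ℝ) (m : ℕ) (z : ℝ) : ℝ :=
  m.factorial * Gamma δ / Gamma (m + δ) * lagPoly (δ - 1) m z

theorem normLagPoly_eq_sum (hδ : 0 < δ) (m : ℕ) (z : ℝ) :
    normLagPoly δ m z
      = ∑ i ∈ range (m + 1), m.choose i * ((-1) ^ i * Gamma δ / Gamma (i + δ) * z ^ i) := by
  rw [normLagPoly, lagPoly, mul_sum]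
  refine sum_congr rfl fun i hi => ?_
  have him : i ≤ m := Nat.lt_succ_iff.mp (mem_range.mp hi)
  rw [show (m : ℝ) + (δ - 1) + 1 = m + δ by ring, show (i : ℝ) + (δ - 1) + 1 = i + δ by ring]
  have hm : Gamma (m + δ) ≠ 0 := (Gamma_pos_of_pos (by positivity)).ne'
  have hi' : Gamma (i + δ) ≠ 0 := (Gamma_pos_of_pos (by positivity)).ne'
  have hfact : (m.choose i * i.factorial * (m - i).factorial : ℝ) = m.factorial := by
    exact_mod_cast Nat.choose_mul_factorial_mul_factorial him
  field_simp
  rw [← hfact]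
  ring

theorem normLagPoly_mul (hδ : 0 < δ) (k : ℕ) (p y : ℝ) :
    normLagPoly δ k (p * y)
      = ∑ l ∈ range (k + 1), k.choose l * p ^ l * (1 - p) ^ (k - l) * normLagPoly δ l y := by
  simp_rw [normLagPoly_eq_sum hδ, sum_choose_mul_pow_mul_sum_choose, add_sub_cancel, one_pow,
    mul_one, mul_pow]
  refine sum_congr rfl fun i _ => ?_
  ring

theorem lagChar_of_pos {τ : ℝ} (hτ : 0 < τ) (m : ℕ) (x w : ℝ) :
    lagChar δ τ m x w
      = Complex.exp (τ * (Complex.I * w - x ^ 2 / 2)) * normLagPoly δ m (τ * x ^ 2) := by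
  rw [lagChar, normLagPoly, abs_of_pos hτ]
  push_cast
  ring_nf

end NormalizedLaguerre

theorem quantum_bessel_intertwining_pos_general
    (δ : ℝ) (hδ : 1 ≤ δ) (k : ℕ) (s t : ℝ) (hs : 0 < s) (ht : 0 < t)
    (x : ℝ) (w : ℝ) :
    Complex.exp ((t : ℂ) * (-Complex.I * (w : ℂ) - (x : ℂ) ^ 2 / 2)) *
        lagChar δ s k x (-w) =
      ∑ l ∈ Finset.range (k + 1),
        ((Nat.choose k l * (s / (s + t)) ^ l * (1 - s / (s + t)) ^ (k - l) : ℝ) : ℂ) *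
          lagChar δ (s + t) l x (-w) := by
  have hu : 0 < s + t := by linarith
  have hdilate : s * x ^ 2 = s / (s + t) * ((s + t) * x ^ 2) := by field_simp
  have hexp : Complex.exp ((t : ℂ) * (-Complex.I * (w : ℂ) - (x : ℂ) ^ 2 / 2)) *
      Complex.exp (s * (Complex.I * (-w : ℝ) - x ^ 2 / 2))
        = Complex.exp ((s + t : ℝ) * (Complex.I * (-w : ℝ) - x ^ 2 / 2)) := by
    rw [← Complex.exp_add]
    push_cast
    ring_nf
  simp_rw [lagChar_of_pos hs, lagChar_of_pos hu, ← mul_assoc, hexp]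
  rw [hdilate, normLagPoly_mul (by linarith) k (s / (s + t)), Complex.ofReal_sum, mul_sum]
  refine sum_congr rfl fun l _ => ?_
  push_cast
  ring

/-- Intertwining identity for the quantum Bessel semigroup of dimension `δ ≥ 1` in the
regime `s > 0`, with binomial(k, s/u) mixing weights, where `u = s + t`. -/
theorem quantum_bessel_intertwining_pos
    (δ : ℝ) (hδ : 1 ≤ δ) (k : ℕ) (s t : ℝ) (hs : 0 < s) (ht : 0 < t)
    (x : ℝ) (hx : 0 ≤ x) (w : ℝ) :
    Complex.exp ((t : ℂ) * (-Complex.I * (w : ℂ) - (x : ℂ) ^ 2 / 2)) *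
        lagChar δ s k x (-w) =
      ∑ l ∈ Finset.range (k + 1),
        ((Nat.choose k l * (s / (s + t)) ^ l * (1 - s / (s + t)) ^ (k - l) : ℝ) : ℂ) *
          lagChar δ (s + t) l x (-w) :=
  quantum_bessel_intertwining_pos_general δ hδ k s t hs ht x w
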